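/- arXiv:2310.01741 — 3 statements merged into one kernel-verified Lean document; each statement's English description precedes it below -/
import Mathlib

section
/- Let Σ be an oriented smooth surface in S⁶ and let C be the cone over Σ in ℝ⁷. The following are equivalent: (i) Σ is a J-holomorphic curve in (S⁶, J); (ii) C is an associative submanifold of (ℝ⁷, φₑ); (iii) Re Ω(u,v,w) = 0 for all u,v ∈ TΣ and w ∈ TS⁶; (iv) u ×_{S⁶} v = 0 for all u,v ∈ TΣ; (v) u × v ∈ NΣ for all u ∈ TΣ and v ∈ NΣ. -/
open scoped RealInnerProductSpace

noncomputable section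

/-- ℝ⁷ with its Euclidean inner product. -/
abbrev E7 : Type := EuclideanSpace ℝ (Fin 7)

/-- (e^i ∧ e^j ∧ e^k)(x, y, z). -/
def tripleDet (i j k : Fin 7) (x y z : E7) : ℝ :=
  Matrix.det !![x i, y i, z i; x j, y j, z j; x k, y k, z k]

/-- The standard G₂ 3-form
φₑ = e^{123} − e^{145} − e^{167} − e^{246} − e^{275} − e^{347} − e^{356}
(indices shifted to start from 0). -/
def phiE (x y z : E7) : ℝ :=
  tripleDet 0 1 2 x y z - tripleDet 0 3 4 x y z - tripleDet 0 5 6 x y z -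
    tripleDet 1 3 5 x y z - tripleDet 1 6 4 x y z - tripleDet 2 3 6 x y z -
    tripleDet 2 4 5 x y z

/-- The octonionic cross product on ℝ⁷ = Im 𝕆, characterized by ⟨u × v, w⟩ = φₑ(u,v,w). -/
def cross7 (u v : E7) : E7 :=
  (EuclideanSpace.equiv (Fin 7) ℝ).symm fun k => phiE u v (EuclideanSpace.single k 1)

/-- Tangential projection onto T_x S⁶ (for ‖x‖ = 1): w ↦ w − ⟨x,w⟩x. -/
def tproj (x w : E7) : E7 := w - ⟪x, w⟫ • x

/-- The associator of ℝ⁷: [u,v,w] = (u×v)×w + ⟨v,w⟩u − ⟨u,w⟩v. -/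
def assoc7 (u v w : E7) : E7 :=
  cross7 (cross7 u v) w + ⟪v, w⟫ • u - ⟪u, w⟫ • v

/-- The J-antilinear multiplication ×_{S⁶}: the tangential projection of the cross product,
equivalently g(u ×_{S⁶} v, w) = Re Ω(u,v,w), equivalently u ×_{S⁶} v = (∇_u J)v. -/
def crossS6 (x u v : E7) : E7 := tproj x (cross7 u v)

/-- Re Ω at a point of S⁶, evaluated on tangent vectors: from φₑ = r² dr ∧ ω + r³ Re Ω one has
Re Ω(u,v,w) = φₑ(u,v,w) for u, v, w tangent to S⁶. -/
def ReOmega (u v w : E7) : ℝ := phiE u v w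


/-!
Choose an orthonormal basis `e₁, e₂` of `T`. Since `⟪a × b, c⟫ = φₑ(a, b, c)` is alternating and
`|a × b|² = |a|²|b|² - ⟪a, b⟫²`, for orthonormal `a, b` and a unit vector `c` the vector `a × b`
lies on the line `ℝc` iff `φₑ(a, b, c)² = 1`. Applied to `x × e₁ ∈ ℝe₂` and to `e₁ × e₂ ∈ ℝx`,
this shows that (i) and (iv) both say `φₑ(x, e₁, e₂) = ±1`.

(iii) is (iv) tested against the tangent vectors of `S⁶`. For `u, v ∈ T` the associator
`[u, v, x] = (u × v) × x` vanishes iff `u × v ∈ ℝx`, which is (iv); conversely the associator is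
trilinear and alternating, so on `ℝx ⊕ T` it is determined by `[x, e₁, e₂] = (x × e₁) × e₂`, which
vanishes when `x × e₁ ∈ ℝe₂`. Finally (v) follows from (i) and (iv) by the symmetries of `φₑ`,
and conversely (v) applied to the normal part of `e₁ × e₂` forces it to vanish.
-/

lemma tripleDet_eq (i j k : Fin 7) (x y z : E7) :
    tripleDet i j k x y z =
      x i * (y j * z k - z j * y k) - y i * (x j * z k - z j * x k)
        + z i * (x j * y k - y j * x k) := by
  simp [tripleDet, Matrix.det_fin_three]
  ring

lemma cross7_eq_coords (u v : E7) : cross7 u v = WithLp.toLp 2 ![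
    u 1 * v 2 - u 2 * v 1 - (u 3 * v 4 - u 4 * v 3) - (u 5 * v 6 - u 6 * v 5),
    u 2 * v 0 - u 0 * v 2 - (u 3 * v 5 - u 5 * v 3) - (u 6 * v 4 - u 4 * v 6),
    u 0 * v 1 - u 1 * v 0 - (u 3 * v 6 - u 6 * v 3) - (u 4 * v 5 - u 5 * v 4),
    u 0 * v 4 - u 4 * v 0 + (u 1 * v 5 - u 5 * v 1) + (u 2 * v 6 - u 6 * v 2),
    u 3 * v 0 - u 0 * v 3 + (u 6 * v 1 - u 1 * v 6) + (u 2 * v 5 - u 5 * v 2),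
    u 0 * v 6 - u 6 * v 0 + (u 3 * v 1 - u 1 * v 3) + (u 4 * v 2 - u 2 * v 4),
    u 5 * v 0 - u 0 * v 5 + (u 1 * v 4 - u 4 * v 1) + (u 3 * v 2 - u 2 * v 3)] := by
  ext k
  fin_cases k <;> simp [cross7, phiE, tripleDet_eq, PiLp.single_apply] <;> ring

lemma inner_eq_coords (u v : E7) :
    ⟪u, v⟫ = u 0 * v 0 + u 1 * v 1 + u 2 * v 2 + u 3 * v 3 + u 4 * v 4 + u 5 * v 5 + u 6 * v 6 := by
  simp [PiLp.inner_apply, Fin.sum_univ_seven]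
  ring

lemma inner_cross7 (u v w : E7) : ⟪cross7 u v, w⟫ = phiE u v w := by
  simp [inner_eq_coords, cross7_eq_coords, phiE, tripleDet_eq]
  ring

lemma phiE_cyclic (u v w : E7) : phiE u v w = phiE v w u := by
  simp only [phiE, tripleDet_eq]
  ring

lemma phiE_swap_right (u v w : E7) : phiE u v w = -phiE u w v := by
  simp only [phiE, tripleDet_eq]
  ring

lemma phiE_self_right (u v : E7) : phiE u v v = 0 := by
  linarith [phiE_swap_right u v v]

lemma cross7_add_left (u u' v : E7) : cross7 (u + u') v = cross7 u v + cross7 u' v := by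
  ext k; fin_cases k <;> simp [cross7_eq_coords] <;> ring

lemma cross7_add_right (u v v' : E7) : cross7 u (v + v') = cross7 u v + cross7 u v' := by
  ext k; fin_cases k <;> simp [cross7_eq_coords] <;> ring

lemma cross7_smul_left (c : ℝ) (u v : E7) : cross7 (c • u) v = c • cross7 u v := by
  ext k; fin_cases k <;> simp [cross7_eq_coords] <;> ring

lemma cross7_smul_right (c : ℝ) (u v : E7) : cross7 u (c • v) = c • cross7 u v := by
  ext k; fin_cases k <;> simp [cross7_eq_coords] <;> ring

lemma cross7_anticomm (u v : E7) : cross7 u v = -cross7 v u := by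
  ext k; fin_cases k <;> simp [cross7_eq_coords] <;> ring

lemma cross7_self (u : E7) : cross7 u u = 0 := by
  ext k; fin_cases k <;> simp [cross7_eq_coords] <;> ring

lemma cross7_zero_left (v : E7) : cross7 0 v = 0 := by
  simpa using cross7_smul_left 0 0 v

lemma cross7_cross7_self (u v : E7) : cross7 (cross7 u v) v = ⟪u, v⟫ • v - ⟪v, v⟫ • u := by
  simp only [inner_eq_coords]
  ext k; fin_cases k <;> simp [cross7_eq_coords] <;> ring

lemma inner_cross7_self (u v : E7) :
    ⟪cross7 u v, cross7 u v⟫ = ⟪u, u⟫ * ⟪v, v⟫ - ⟪u, v⟫ ^ 2 := by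
  simp only [inner_eq_coords, cross7_eq_coords, Fin.isValue, Matrix.cons_val_zero,
    Matrix.cons_val_one, Matrix.cons_val]
  ring

lemma cross7_lincomb (a b c d : ℝ) (p q : E7) :
    cross7 (a • p + b • q) (c • p + d • q) = (a * d - b * c) • cross7 p q := by
  simp only [cross7_add_left, cross7_add_right, cross7_smul_left, cross7_smul_right, cross7_self,
    cross7_anticomm q p, smul_zero, smul_neg]
  module

section Projection

variable {x : E7}

lemma tproj_eq_zero_iff_eq_smul {y : E7} : tproj x y = 0 ↔ y = ⟪x, y⟫ • x :=
  sub_eq_zero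

lemma tproj_smul (c : ℝ) (y : E7) : tproj x (c • y) = c • tproj x y := by
  simp only [tproj, real_inner_smul_right, smul_sub, smul_smul]

lemma inner_tproj (hx : ⟪x, x⟫ = 1) (y : E7) : ⟪x, tproj x y⟫ = 0 := by
  rw [tproj, inner_sub_right, real_inner_smul_right, hx, mul_one, sub_self]

lemma inner_tproj_of_inner_eq_zero {t : E7} (h : ⟪x, t⟫ = 0) (y : E7) :
    ⟪t, tproj x y⟫ = ⟪t, y⟫ := by
  rw [tproj, inner_sub_right, real_inner_smul_right, real_inner_comm x t, h, mul_zero, sub_zero]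

lemma inner_tproj_self (hx : ⟪x, x⟫ = 1) (y : E7) :
    ⟪tproj x y, tproj x y⟫ = ⟪y, y⟫ - ⟪x, y⟫ ^ 2 := by
  simp only [tproj, inner_sub_left, inner_sub_right, real_inner_smul_left, real_inner_smul_right,
    hx, real_inner_comm x y]
  ring

lemma tproj_eq_zero_iff (hx : ⟪x, x⟫ = 1) {y : E7} : tproj x y = 0 ↔ ⟪x, y⟫ ^ 2 = ⟪y, y⟫ := by
  rw [← inner_self_eq_zero (𝕜 := ℝ), inner_tproj_self hx, sub_eq_zero, eq_comm]

lemma tproj_eq_zero_iff_forall_inner (hx : ⟪x, x⟫ = 1) {y : E7} :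
    tproj x y = 0 ↔ ∀ w, ⟪x, w⟫ = 0 → ⟪y, w⟫ = 0 := by
  refine ⟨fun h w hw => ?_, fun h => ?_⟩
  · rw [tproj_eq_zero_iff_eq_smul.mp h, real_inner_smul_left, hw, mul_zero]
  · have hy := h _ (inner_tproj hx y)
    rw [← inner_self_eq_zero (𝕜 := ℝ)]
    nth_rewrite 1 [tproj]
    rw [inner_sub_left, hy, real_inner_smul_left, inner_tproj hx, mul_zero, sub_zero]

lemma tproj_cross7_eq_zero_iff {a b c : E7} (ha : ⟪a, a⟫ = 1) (hb : ⟪b, b⟫ = 1) (hab : ⟪a, b⟫ = 0)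
    (hc : ⟪c, c⟫ = 1) : tproj c (cross7 a b) = 0 ↔ phiE a b c ^ 2 = 1 := by
  rw [tproj_eq_zero_iff hc, inner_cross7_self, ha, hb, hab, real_inner_comm, inner_cross7]
  norm_num

lemma crossS6_eq_zero_iff_forall_reOmega (hx : ⟪x, x⟫ = 1) (u v : E7) :
    crossS6 x u v = 0 ↔ ∀ w, ⟪x, w⟫ = 0 → ReOmega u v w = 0 := by
  simp only [crossS6, tproj_eq_zero_iff_forall_inner hx, inner_cross7, ReOmega]

lemma crossS6_eq_zero_of_assoc7_eq_zero (hx : ⟪x, x⟫ = 1) {u v : E7} (hu : ⟪x, u⟫ = 0)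
    (hv : ⟪x, v⟫ = 0) (h : assoc7 u v x = 0) : crossS6 x u v = 0 := by
  rw [assoc7, real_inner_comm, hv, real_inner_comm, hu, zero_smul, zero_smul, add_zero,
    sub_zero] at h
  have hnorm := inner_cross7_self (cross7 u v) x
  rw [h, inner_zero_left, hx, mul_one, eq_comm, sub_eq_zero] at hnorm
  rw [crossS6, tproj_eq_zero_iff hx, real_inner_comm]
  exact hnorm.symm

end Projection

lemma assoc7_add_left (u u' v w : E7) : assoc7 (u + u') v w = assoc7 u v w + assoc7 u' v w := by
  simp only [assoc7, cross7_add_left, inner_add_left, add_smul]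
  module

lemma assoc7_add_middle (u v v' w : E7) : assoc7 u (v + v') w = assoc7 u v w + assoc7 u v' w := by
  simp only [assoc7, cross7_add_left, cross7_add_right, inner_add_left, add_smul]
  module

lemma assoc7_add_right (u v w w' : E7) : assoc7 u v (w + w') = assoc7 u v w + assoc7 u v w' := by
  simp only [assoc7, cross7_add_right, inner_add_right, add_smul]
  module

lemma assoc7_smul_left (c : ℝ) (u v w : E7) : assoc7 (c • u) v w = c • assoc7 u v w := by
  simp only [assoc7, cross7_smul_left, real_inner_smul_left, smul_smul, mul_comm]
  module

lemma assoc7_smul_middle (c : ℝ) (u v w : E7) : assoc7 u (c • v) w = c • assoc7 u v w := by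
  simp only [assoc7, cross7_smul_left, cross7_smul_right, real_inner_smul_left, smul_smul,
    mul_comm]
  module

lemma assoc7_smul_right (c : ℝ) (u v w : E7) : assoc7 u v (c • w) = c • assoc7 u v w := by
  simp only [assoc7, cross7_smul_right, real_inner_smul_right]
  module

lemma assoc7_self_left (u w : E7) : assoc7 u u w = 0 := by
  simp [assoc7, cross7_self, cross7_zero_left]

lemma assoc7_self_right (u v : E7) : assoc7 u v v = 0 := by
  rw [assoc7, cross7_cross7_self]
  module

lemma assoc7_swap_left (u v w : E7) : assoc7 u v w = -assoc7 v u w := by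
  have h := assoc7_self_left (u + v) w
  rw [assoc7_add_left, assoc7_add_middle, assoc7_add_middle, assoc7_self_left, assoc7_self_left,
    zero_add, add_zero] at h
  exact eq_neg_of_add_eq_zero_left h

lemma assoc7_swap_right (u v w : E7) : assoc7 u v w = -assoc7 u w v := by
  have h := assoc7_self_right u (v + w)
  rw [assoc7_add_middle, assoc7_add_right, assoc7_add_right, assoc7_self_right, assoc7_self_right,
    zero_add, add_zero] at h
  exact eq_neg_of_add_eq_zero_left h

lemma assoc7_self_left_right (u v : E7) : assoc7 u v u = 0 := by
  rw [assoc7_swap_left, assoc7_self_right, neg_zero]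

lemma assoc7_eq_zero_of_mem_span {a b c u v w : E7} (h : assoc7 a b c = 0)
    (hu : u ∈ Submodule.span ℝ {a, b, c}) (hv : v ∈ Submodule.span ℝ {a, b, c})
    (hw : w ∈ Submodule.span ℝ {a, b, c}) : assoc7 u v w = 0 := by
  have hacb : assoc7 a c b = 0 := by rw [assoc7_swap_right, h, neg_zero]
  have hbac : assoc7 b a c = 0 := by rw [assoc7_swap_left, h, neg_zero]
  have hbca : assoc7 b c a = 0 := by rw [assoc7_swap_right, hbac, neg_zero]
  have hcab : assoc7 c a b = 0 := by rw [assoc7_swap_left, hacb, neg_zero]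
  have hcba : assoc7 c b a = 0 := by rw [assoc7_swap_right, hcab, neg_zero]
  obtain ⟨α, β, γ, rfl⟩ := Submodule.mem_span_triple.mp hu
  obtain ⟨α', β', γ', rfl⟩ := Submodule.mem_span_triple.mp hv
  obtain ⟨α'', β'', γ'', rfl⟩ := Submodule.mem_span_triple.mp hw
  simp [assoc7_add_left, assoc7_add_middle, assoc7_add_right, assoc7_smul_left,
    assoc7_smul_middle, assoc7_smul_right, assoc7_self_left, assoc7_self_right,
    assoc7_self_left_right, h, hacb, hbac, hbca, hcab, hcba]

lemma Submodule.exists_orthonormal_pair_of_finrank_eq_two {E : Type*} [NormedAddCommGroup E]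
    [InnerProductSpace ℝ E] {T : Submodule ℝ E} (hT : Module.finrank ℝ T = 2) :
    ∃ e₁ ∈ T, ∃ e₂ ∈ T, ⟪e₁, e₁⟫ = 1 ∧ ⟪e₂, e₂⟫ = 1 ∧ ⟪e₁, e₂⟫ = 0 ∧
      ∀ t ∈ T, t = ⟪e₁, t⟫ • e₁ + ⟪e₂, t⟫ • e₂ := by
  have : FiniteDimensional ℝ T := Module.finite_of_finrank_eq_succ hT
  let b : OrthonormalBasis (Fin 2) ℝ T := (stdOrthonormalBasis ℝ T).reindex (finCongr hT)
  have hb := orthonormal_iff_ite.mp b.orthonormal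
  refine ⟨b 0, (b 0).2, b 1, (b 1).2, (hb 0 0).trans (if_pos rfl), (hb 1 1).trans (if_pos rfl),
    (hb 0 1).trans (if_neg (by decide)), fun t ht => ?_⟩
  simpa [Fin.sum_univ_two] using congrArg Subtype.val (b.sum_repr' ⟨t, ht⟩).symm

structure IsAdaptedFrame (x : E7) (T : Submodule ℝ E7) (e₁ e₂ : E7) : Prop where
  inner_self_x : ⟪x, x⟫ = 1
  inner_self_e₁ : ⟪e₁, e₁⟫ = 1
  inner_self_e₂ : ⟪e₂, e₂⟫ = 1
  inner_e₁_e₂ : ⟪e₁, e₂⟫ = 0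
  inner_x_of_mem : ∀ t ∈ T, ⟪x, t⟫ = 0
  e₁_mem : e₁ ∈ T
  e₂_mem : e₂ ∈ T
  eq_of_mem : ∀ t ∈ T, t = ⟪e₁, t⟫ • e₁ + ⟪e₂, t⟫ • e₂

lemma exists_isAdaptedFrame {x : E7} (hx : ‖x‖ = 1) {T : Submodule ℝ E7}
    (hT : Module.finrank ℝ T = 2) (hxT : ∀ t ∈ T, ⟪x, t⟫ = 0) :
    ∃ e₁ e₂, IsAdaptedFrame x T e₁ e₂ := by
  obtain ⟨e₁, he₁, e₂, he₂, h₁, h₂, h₁₂, hrepr⟩ :=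
    Submodule.exists_orthonormal_pair_of_finrank_eq_two hT
  exact ⟨e₁, e₂, ⟨by simp [hx], h₁, h₂, h₁₂, hxT, he₁, he₂, hrepr⟩⟩

namespace IsAdaptedFrame

variable {x e₁ e₂ : E7} {T : Submodule ℝ E7}

lemma span_sup_le (F : IsAdaptedFrame x T e₁ e₂) :
    Submodule.span ℝ {x} ⊔ T ≤ Submodule.span ℝ {x, e₁, e₂} := by
  refine sup_le (Submodule.span_mono (by simp)) fun t ht => ?_
  rw [F.eq_of_mem t ht]
  exact Submodule.mem_span_triple.mpr ⟨0, _, _, by rw [zero_smul, zero_add]⟩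

lemma cross7_x_e₁_eq_iff (F : IsAdaptedFrame x T e₁ e₂) :
    cross7 x e₁ = phiE x e₁ e₂ • e₂ ↔ phiE x e₁ e₂ ^ 2 = 1 := by
  rw [← tproj_cross7_eq_zero_iff F.inner_self_x F.inner_self_e₁ (F.inner_x_of_mem _ F.e₁_mem)
    F.inner_self_e₂, tproj_eq_zero_iff_eq_smul, real_inner_comm, inner_cross7]

lemma cross7_x_e₂_eq_iff (F : IsAdaptedFrame x T e₁ e₂) :
    cross7 x e₂ = -phiE x e₁ e₂ • e₁ ↔ phiE x e₁ e₂ ^ 2 = 1 := by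
  rw [← neg_sq, ← phiE_swap_right, ← tproj_cross7_eq_zero_iff F.inner_self_x F.inner_self_e₂
    (F.inner_x_of_mem _ F.e₂_mem) F.inner_self_e₁, tproj_eq_zero_iff_eq_smul, real_inner_comm,
    inner_cross7]

lemma forall_cross7_mem_iff (F : IsAdaptedFrame x T e₁ e₂) :
    (∀ t ∈ T, cross7 x t ∈ T) ↔ phiE x e₁ e₂ ^ 2 = 1 := by
  constructor
  · intro h
    refine F.cross7_x_e₁_eq_iff.mp ?_
    have hJ := F.eq_of_mem _ (h e₁ F.e₁_mem)
    rwa [real_inner_comm, inner_cross7, phiE_self_right, zero_smul, zero_add,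
      real_inner_comm, inner_cross7] at hJ
  · intro hs t ht
    rw [F.eq_of_mem t ht, cross7_add_right, cross7_smul_right, cross7_smul_right,
      F.cross7_x_e₁_eq_iff.mpr hs, F.cross7_x_e₂_eq_iff.mpr hs]
    exact T.add_mem (T.smul_mem _ (T.smul_mem _ F.e₂_mem))
      (T.smul_mem _ (T.smul_mem _ F.e₁_mem))

lemma forall_crossS6_eq_zero_iff_tproj (F : IsAdaptedFrame x T e₁ e₂) :
    (∀ u ∈ T, ∀ v ∈ T, crossS6 x u v = 0) ↔ tproj x (cross7 e₁ e₂) = 0 := by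
  refine ⟨fun h => h e₁ F.e₁_mem e₂ F.e₂_mem, fun h u hu v hv => ?_⟩
  rw [crossS6, F.eq_of_mem u hu, F.eq_of_mem v hv, cross7_lincomb, tproj_smul, h, smul_zero]

lemma forall_crossS6_eq_zero_iff (F : IsAdaptedFrame x T e₁ e₂) :
    (∀ u ∈ T, ∀ v ∈ T, crossS6 x u v = 0) ↔ phiE x e₁ e₂ ^ 2 = 1 := by
  rw [F.forall_crossS6_eq_zero_iff_tproj, phiE_cyclic]
  exact tproj_cross7_eq_zero_iff F.inner_self_e₁ F.inner_self_e₂ F.inner_e₁_e₂ F.inner_self_x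

lemma assoc7_eq_zero (F : IsAdaptedFrame x T e₁ e₂) (hs : phiE x e₁ e₂ ^ 2 = 1) :
    ∀ u ∈ Submodule.span ℝ {x} ⊔ T, ∀ v ∈ Submodule.span ℝ {x} ⊔ T,
      ∀ w ∈ Submodule.span ℝ {x} ⊔ T, assoc7 u v w = 0 := by
  have h : assoc7 x e₁ e₂ = 0 := by
    rw [assoc7, F.cross7_x_e₁_eq_iff.mpr hs, cross7_smul_left, cross7_self, F.inner_e₁_e₂,
      F.inner_x_of_mem _ F.e₂_mem]
    simp
  intro u hu v hv w hw
  exact assoc7_eq_zero_of_mem_span h (F.span_sup_le hu) (F.span_sup_le hv) (F.span_sup_le hw)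

/-- Test the hypothesis on `e₁` and the normal vector `n = tproj x (e₁ × e₂)`:
`⟪e₂, e₁ × n⟫ = -⟪e₁ × e₂, n⟫ = -⟪n, n⟫`. -/
lemma tproj_cross7_eq_zero_of_forall_normal (F : IsAdaptedFrame x T e₁ e₂)
    (h : ∀ u ∈ T, ∀ v : E7, ⟪x, v⟫ = 0 → (∀ t ∈ T, ⟪t, v⟫ = 0) →
      ⟪x, cross7 u v⟫ = 0 ∧ ∀ t ∈ T, ⟪t, cross7 u v⟫ = 0) :
    tproj x (cross7 e₁ e₂) = 0 := by
  set n := tproj x (cross7 e₁ e₂) with hn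
  have hxn : ⟪x, n⟫ = 0 := inner_tproj F.inner_self_x _
  have hTn : ∀ t ∈ T, ⟪t, n⟫ = 0 := by
    intro t ht
    rw [F.eq_of_mem t ht, inner_add_left, real_inner_smul_left, real_inner_smul_left,
      inner_tproj_of_inner_eq_zero (F.inner_x_of_mem _ F.e₁_mem),
      inner_tproj_of_inner_eq_zero (F.inner_x_of_mem _ F.e₂_mem),
      real_inner_comm (cross7 e₁ e₂) e₁, real_inner_comm (cross7 e₁ e₂) e₂, inner_cross7,
      inner_cross7, phiE_cyclic, phiE_self_right, phiE_self_right, mul_zero, mul_zero, add_zero]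
  have hnn : ⟪n, n⟫ = -⟪e₂, cross7 e₁ n⟫ := by
    nth_rewrite 1 [hn]
    rw [tproj, inner_sub_left, real_inner_smul_left, hxn, mul_zero, sub_zero, inner_cross7,
      real_inner_comm, inner_cross7, phiE_swap_right]
  rw [← inner_self_eq_zero (𝕜 := ℝ), hnn, (h e₁ F.e₁_mem n hxn hTn).2 e₂ F.e₂_mem, neg_zero]

end IsAdaptedFrame

lemma inner_cross7_normal_eq_zero {x : E7} {T : Submodule ℝ E7}
    (h₁ : ∀ t ∈ T, cross7 x t ∈ T) (h₄ : ∀ u ∈ T, ∀ v ∈ T, crossS6 x u v = 0) :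
    ∀ u ∈ T, ∀ v : E7, ⟪x, v⟫ = 0 → (∀ t ∈ T, ⟪t, v⟫ = 0) →
      ⟪x, cross7 u v⟫ = 0 ∧ ∀ t ∈ T, ⟪t, cross7 u v⟫ = 0 := by
  intro u hu v hxv hTv
  refine ⟨?_, fun t ht => ?_⟩
  · rw [real_inner_comm, inner_cross7, phiE_cyclic, phiE_cyclic, ← inner_cross7]
    exact hTv _ (h₁ u hu)
  · rw [real_inner_comm, inner_cross7, phiE_swap_right, ← inner_cross7,
      tproj_eq_zero_iff_eq_smul.mp (h₄ u hu t ht), real_inner_smul_left, hxv, mul_zero, neg_zero]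

/-- Let Σ be an oriented smooth surface in S⁶, with tangent plane T at a point x ∈ S⁶, and let
C be the cone over Σ, whose tangent plane at the ray through x is ℝx ⊕ T.  The following are
equivalent: (i) Σ is J-holomorphic at x (T is J-invariant); (ii) C is associative (the
associator vanishes on ℝx ⊕ T); (iii) Re Ω(u,v,w) = 0 for u,v ∈ T and w ∈ T_xS⁶;
(iv) u ×_{S⁶} v = 0 for u,v ∈ T; (v) u × v ∈ NΣ for u ∈ T and v ∈ N_xΣ ⊂ T_xS⁶. -/
theorem statement4 (x : E7) (hx : ‖x‖ = 1) (T : Submodule ℝ E7)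
    (hT2 : Module.finrank ℝ T = 2)
    (hTtan : ∀ t ∈ T, ⟪x, t⟫ = 0) :
    List.TFAE
      [(∀ t ∈ T, cross7 x t ∈ T),
       (∀ u ∈ Submodule.span ℝ {x} ⊔ T, ∀ v ∈ Submodule.span ℝ {x} ⊔ T,
          ∀ w ∈ Submodule.span ℝ {x} ⊔ T, assoc7 u v w = 0),
       (∀ u ∈ T, ∀ v ∈ T, ∀ w : E7, ⟪x, w⟫ = 0 → ReOmega u v w = 0),
       (∀ u ∈ T, ∀ v ∈ T, crossS6 x u v = 0),
       (∀ u ∈ T, ∀ v : E7, ⟪x, v⟫ = 0 → (∀ t ∈ T, ⟪t, v⟫ = 0) →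
          ⟪x, cross7 u v⟫ = 0 ∧ ∀ t ∈ T, ⟪t, cross7 u v⟫ = 0)] := by
  obtain ⟨e₁, e₂, F⟩ := exists_isAdaptedFrame hx hT2 hTtan
  tfae_have 1 ↔ 4 := F.forall_cross7_mem_iff.trans F.forall_crossS6_eq_zero_iff.symm
  tfae_have 3 ↔ 4 := by
    simp only [crossS6_eq_zero_iff_forall_reOmega F.inner_self_x]
  tfae_have 4 → 2 := fun h₄ => F.assoc7_eq_zero (F.forall_crossS6_eq_zero_iff.mp h₄)
  tfae_have 2 → 4 := by
    have hxV : x ∈ Submodule.span ℝ {x} ⊔ T :=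
      Submodule.mem_sup_left (Submodule.mem_span_singleton_self x)
    exact fun h₂ u hu v hv => crossS6_eq_zero_of_assoc7_eq_zero F.inner_self_x (hTtan u hu)
      (hTtan v hv) (h₂ u (Submodule.mem_sup_right hu) v (Submodule.mem_sup_right hv) x hxV)
  tfae_have 4 → 5 := fun h₄ => inner_cross7_normal_eq_zero
    (F.forall_cross7_mem_iff.mpr (F.forall_crossS6_eq_zero_iff.mp h₄)) h₄
  tfae_have 5 → 4 := fun h₅ =>
    F.forall_crossS6_eq_zero_iff_tproj.mpr (F.tproj_cross7_eq_zero_of_forall_normal h₅)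
  tfae_finish
end
end

section
/- Let C be an associative cone in ℝ⁷ with link Σ, let m ∈ ℕ₀, λ ∈ ℝ, and let v(r,σ) = Σ_{j=0}^m r^{λ−1}(log r)^j ν_{Σ,j} with ν_{Σ,j} ∈ C^∞(N_{S⁶}Σ). If 𝐃_C v = 0, then m = 0, i.e. v(r,σ) = r^{λ−1} ν_{Σ,0}: no nontrivial log terms occur in homogeneous kernels of the Fueter operator. -/
open scoped RealInnerProductSpace

lemma polyaux (n : ℕ) (a : ℕ → ℝ)
    (h : ∀ t : ℝ, ∑ k ∈ Finset.range n, a k * t ^ k = 0) :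
    ∀ k < n, a k = 0 := by
  have hp : (∑ k ∈ Finset.range n, Polynomial.C (a k) * Polynomial.X ^ k) = (0 : Polynomial ℝ) := by
    apply Polynomial.funext
    intro t
    simp [Polynomial.eval_finset_sum, h t]
  intro k hk
  have h2 := congrArg (fun p => Polynomial.coeff p k) hp
  simpa [Polynomial.finset_sum_coeff, Polynomial.coeff_C_mul, Polynomial.coeff_X_pow,
    Finset.sum_ite_eq', Finset.mem_range, hk] using h2

/-- Let C be an associative cone in ℝ⁷ with closed link Σ.  Here `H` is the space of smooth
normal vector fields on Σ with its L²(Σ)-inner product, `D = 𝐃_Σ` is the Dirac operator of the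
link (formally self-adjoint since Σ is closed) and `J` the almost complex structure, so that
`J² = −1`, `J` is an isometry, and `𝐃_Σ(Jν) = −J 𝐃_Σ ν`.

Suppose v(r,σ) = Σ_{j=0}^m r^{λ−1}(log r)^j ν_j satisfies 𝐃_C v = 0; by the cone formula
𝐃_C (r^{λ−1}(log r)^j ν) = r^{λ−2}(log r)^j(𝐃_Σν + (λ+1)Jν) + j r^{λ−2}(log r)^{j−1} Jν this
means that the hypothesis `hker` below holds for all r > 0.  Then ν_j = 0 for all 1 ≤ j ≤ m,
i.e. m = 0 and v(r,σ) = r^{λ−1}ν₀: no nontrivial log terms occur in homogeneous kernels of the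
Fueter operator. -/
theorem statement9 {H : Type*} [NormedAddCommGroup H] [InnerProductSpace ℝ H]
    (D J : H →ₗ[ℝ] H)
    (hJJ : ∀ x, J (J x) = -x)
    (hanti : ∀ x, D (J x) = -J (D x))
    (hsym : ∀ x y, ⟪D x, y⟫ = ⟪x, D y⟫)
    (hJiso : ∀ x y, ⟪J x, J y⟫ = ⟪x, y⟫)
    (m : ℕ) (l : ℝ) (ν : ℕ → H)
    (hker : ∀ r : ℝ, 0 < r →
      ∑ j ∈ Finset.range (m + 1),
          ((r ^ (l - 2) * Real.log r ^ j) • (D (ν j) + (l + 1) • J (ν j))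
            + ((j : ℝ) * (r ^ (l - 2) * Real.log r ^ (j - 1))) • J (ν j)) = 0) :
    ∀ j, 1 ≤ j → j ≤ m → ν j = 0 := by
  set B : ℕ → H := fun j => D (ν j) + (l + 1) • J (ν j) with hB
  have hJadj : ∀ x w : H, ⟪J x, w⟫ = -⟪x, J w⟫ := by
    intro x w
    have h1 : ⟪J x, J (J w)⟫ = ⟪x, J w⟫ := hJiso x (J w)
    rw [hJJ w, inner_neg_right] at h1
    linarith
  -- Step 1: factor out r^(l-2)
  have hS : ∀ t : ℝ, ∑ j ∈ Finset.range (m + 1),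
      (t ^ j • B j + ((j : ℝ) * t ^ (j - 1)) • J (ν j)) = 0 := by
    intro t
    have hr : (0 : ℝ) < Real.exp t := Real.exp_pos t
    have hc : (0 : ℝ) < (Real.exp t) ^ (l - 2) := Real.rpow_pos_of_pos hr _
    have h0 := hker (Real.exp t) hr
    rw [Real.log_exp] at h0
    have h1 : ∑ j ∈ Finset.range (m + 1),
        (((Real.exp t) ^ (l - 2) * t ^ j) • B j
          + ((j : ℝ) * ((Real.exp t) ^ (l - 2) * t ^ (j - 1))) • J (ν j))
        = (Real.exp t) ^ (l - 2) • ∑ j ∈ Finset.range (m + 1),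
            (t ^ j • B j + ((j : ℝ) * t ^ (j - 1)) • J (ν j)) := by
      rw [Finset.smul_sum]
      refine Finset.sum_congr rfl fun j _ => ?_
      simp only [hB]
      module
    rw [h1] at h0
    exact (smul_eq_zero.mp h0).resolve_left (ne_of_gt hc)
  -- Step 2: reindex into a genuine polynomial in t
  set c : ℕ → H := fun k =>
    B k + (if k < m then ((k : ℝ) + 1) • J (ν (k + 1)) else 0) with hcdef
  have hS' : ∀ t : ℝ, ∑ k ∈ Finset.range (m + 1), t ^ k • c k = 0 := by
    intro t
    have L : ∑ k ∈ Finset.range (m + 1), t ^ k • c k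
        = ∑ k ∈ Finset.range (m + 1), t ^ k • B k
          + ∑ k ∈ Finset.range m, t ^ k • (((k : ℝ) + 1) • J (ν (k + 1))) := by
      simp only [hcdef, smul_add]
      rw [Finset.sum_add_distrib]
      congr 1
      rw [Finset.sum_range_succ, if_neg (lt_irrefl m), smul_zero, add_zero]
      exact Finset.sum_congr rfl fun k hk => by rw [if_pos (Finset.mem_range.mp hk)]
    have R : ∑ j ∈ Finset.range (m + 1),
        (t ^ j • B j + ((j : ℝ) * t ^ (j - 1)) • J (ν j))
        = ∑ k ∈ Finset.range (m + 1), t ^ k • B k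
          + ∑ k ∈ Finset.range m, t ^ k • (((k : ℝ) + 1) • J (ν (k + 1))) := by
      rw [Finset.sum_add_distrib]
      congr 1
      rw [Finset.sum_range_succ' (fun j => ((j : ℝ) * t ^ (j - 1)) • J (ν j)) m]
      simp only [Nat.cast_zero, zero_mul, zero_smul, add_zero]
      refine Finset.sum_congr rfl fun k hk => ?_
      rw [Nat.add_sub_cancel]
      push_cast
      rw [mul_comm, mul_smul]
    rw [L, ← R]
    exact hS t
  -- Step 3: coefficients vanish
  have hc0 : ∀ k, k ≤ m → c k = 0 := by
    intro k hk
    have hy : ∀ y : H, ⟪c k, y⟫ = 0 := by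
      intro y
      refine polyaux (m + 1) (fun k => ⟪c k, y⟫) (fun t => ?_) k (by omega)
      have h2 := congrArg (fun z => ⟪z, y⟫) (hS' t)
      simpa [sum_inner, real_inner_smul_left, mul_comm] using h2
    exact inner_self_eq_zero.mp (hy (c k))
  have hC : ∀ k, k < m → B k + ((k : ℝ) + 1) • J (ν (k + 1)) = 0 := by
    intro k hk
    have h1 := hc0 k (le_of_lt hk)
    simpa [hcdef, if_pos hk] using h1
  have hBm : B m = 0 := by
    have h1 := hc0 m le_rfl
    simpa [hcdef] using h1
  -- Step 4: symmetry of the pairing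
  have hDsym : ∀ x y : H, ⟪D x, J y⟫ = ⟪D y, J x⟫ := by
    intro x y
    calc ⟪D x, J y⟫ = ⟪x, D (J y)⟫ := hsym x (J y)
      _ = -⟪x, J (D y)⟫ := by rw [hanti]; simp
      _ = ⟪J x, D y⟫ := (hJadj x (D y)).symm
      _ = ⟪D y, J x⟫ := real_inner_comm _ _
  have hBsym : ∀ x y : H, ⟪D x + (l + 1) • J x, J y⟫ = ⟪D y + (l + 1) • J y, J x⟫ := by
    intro x y
    rw [inner_add_left, inner_add_left, real_inner_smul_left, real_inner_smul_left,
      hJiso, hJiso, hDsym, real_inner_comm x y]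
  -- Step 5: key lemma
  have key : ∀ j, 1 ≤ j → j ≤ m → B j = 0 → ν j = 0 := by
    intro j h1 h2 hBj
    have hrel := hC (j - 1) (by omega)
    rw [Nat.sub_add_cancel h1] at hrel
    have hco : ((j - 1 : ℕ) : ℝ) + 1 = (j : ℝ) := by
      rw [Nat.cast_sub h1]; push_cast; ring
    rw [hco] at hrel
    have h3 := congrArg (fun z => ⟪z, J (ν j)⟫) hrel
    simp only [inner_add_left, real_inner_smul_left, inner_zero_left] at h3
    have h4 : ⟪B (j - 1), J (ν j)⟫ = 0 := by
      have h5 : ⟪B (j - 1), J (ν j)⟫ = ⟪B j, J (ν (j - 1))⟫ := by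
        simp only [hB]; exact hBsym _ _
      rw [h5, hBj, inner_zero_left]
    rw [h4, zero_add, hJiso] at h3
    have hj0 : (j : ℝ) ≠ 0 := Nat.cast_ne_zero.mpr (by omega)
    have h6 : ⟪ν j, ν j⟫ = 0 := by
      rcases mul_eq_zero.mp h3 with h | h
      · exact absurd h hj0
      · exact h
    exact inner_self_eq_zero.mp h6
  -- Step 6: downward induction
  have main : ∀ d j, 1 ≤ j → j ≤ m → m - j ≤ d → ν j = 0 := by
    intro d
    induction d with
    | zero =>
      intro j h1 h2 h3
      have hjm : j = m := by omega
      subst hjm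
      exact key j h1 h2 hBm
    | succ d ih =>
      intro j h1 h2 h3
      by_cases h : m - j ≤ d
      · exact ih j h1 h2 h
      · have hjm : j < m := by omega
        have hν1 : ν (j + 1) = 0 := ih (j + 1) (by omega) (by omega) (by omega)
        have hBj : B j = 0 := by
          have h5 := hC j hjm
          rw [hν1] at h5
          simpa using h5
        exact key j h1 h2 hBj
  intro j h1 h2
  exact main (m - j) j h1 h2 le_rfl
end

section
/- Let C be a special Lagrangian cone in ℂ³ which is not a 3-plane, with connected link Σ that is not a totally geodesic S², and let s-ind₋(C) = d_{−1}/2 + Σ_{−1<λ<1} d_λ − 7 be its lower stability-index. Then, since d_{−1} = b¹(Σ), d_0 ≥ 7 and d_λ ≥ 0, one has s-ind₋(C) ≥ b¹(Σ)/2; moreover genus(Σ) ≥ 1 implies b¹(Σ) ≥ 2, hence s-ind₋(C) ≥ b¹(Σ)/2 ≥ 1. -/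
/-- Let C be a special Lagrangian cone in ℂ³ which is not a 3-plane, with connected link Σ that is
not a totally geodesic S².  Here `d l` is the dimension of the homogeneous kernel `V_l` of the
Fueter operator of the cone, `b1 = b¹(Σ)` is the first Betti number of the link, and `g` its genus.
Given `d (−1) = b¹(Σ)` (harmonic 1-forms), `d 0 ≥ 7`, `b¹(Σ) = 2g` with `g ≥ 1`, the lower
stability-index `s-ind₋(C) = d(−1)/2 + Σ_{−1<l<1} d l − 7` satisfies
`s-ind₋(C) ≥ b¹(Σ)/2`, `b¹(Σ) ≥ 2`, and hence `s-ind₋(C) ≥ 1`. -/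
theorem statement16 (d : ℝ → ℕ) (b1 g : ℕ)
    (hfin : (Set.Ioo (-1 : ℝ) 1 ∩ Function.support fun l => ((d l : ℚ))).Finite)
    (hd1 : d (-1) = b1)
    (hd0 : 7 ≤ d 0)
    (hgenus : b1 = 2 * g) (hg : 1 ≤ g) :
    (b1 : ℚ) / 2 ≤ (d (-1) : ℚ) / 2 + (∑ᶠ l ∈ Set.Ioo (-1 : ℝ) 1, (d l : ℚ)) - 7 ∧
      2 ≤ b1 ∧
      (1 : ℚ) ≤ (d (-1) : ℚ) / 2 + (∑ᶠ l ∈ Set.Ioo (-1 : ℝ) 1, (d l : ℚ)) - 7 := by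
  have hsum : (d 0 : ℚ) ≤ ∑ᶠ l ∈ Set.Ioo (-1 : ℝ) 1, (d l : ℚ) := by
    rw [finsum_mem_eq_sum _ hfin]
    rcases le_or_gt (d 0) 0 with h | h
    · calc (d 0 : ℚ) ≤ 0 := by exact_mod_cast h
        _ ≤ _ := Finset.sum_nonneg fun i _ => by positivity
    · refine Finset.single_le_sum (f := fun l => ((d l : ℚ))) (fun i _ => by positivity) ?_
      simp only [Set.Finite.mem_toFinset, Set.mem_inter_iff, Function.mem_support]
      refine ⟨⟨by norm_num, by norm_num⟩, ?_⟩
      exact_mod_cast h.ne'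
  have h7 : (7 : ℚ) ≤ ∑ᶠ l ∈ Set.Ioo (-1 : ℝ) 1, (d l : ℚ) := by
    calc (7 : ℚ) ≤ (d 0 : ℚ) := by exact_mod_cast hd0
      _ ≤ _ := hsum
  have hb2 : 2 ≤ b1 := by omega
  refine ⟨by rw [hd1]; linarith, hb2, ?_⟩
  have : (2 : ℚ) ≤ (b1 : ℚ) := by exact_mod_cast hb2
  rw [hd1]; linarith
end
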